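/- Fix an orthonormal basis {|i⟩ : 1 ≤ i ≤ d} of ℂ^d, a prior probability distribution {p_i} on its basis states with maximal value p_1 = max_i p_i, and a POVM {M_s}. Let I denote the mutual information between Alice's input and Bob's outcome when Alice sends |i⟩ with probability p_i, and let Ĩ denote the mutual information when Alice sends |i⟩ with uniform probability 1/d and Bob uses the same POVM. Then (1/(d p_1)) I ≤ Ĩ. -/

import Mathlib

open scoped BigOperators ComplexOrder
open Matrix

noncomputable section

/-- Shannon entropy (in bits) of a finitely-indexed probability vector. -/
def shannonEntropy {ι : Type*} [Fintype ι] (q : ι → ℝ) : ℝ :=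
  -∑ i, q i * Real.logb 2 (q i)

/-- Born probability ⟨v|M|v⟩ of POVM element `M` on the (unit vector) state `v`. -/
def outProb {d : ℕ} (M : Matrix (Fin d) (Fin d) ℂ) (v : Fin d → ℂ) : ℝ :=
  (star v ⬝ᵥ M.mulVec v).re

/-- A finite family of matrices is a POVM if each member is positive semidefinite
and they sum to the identity. -/
def IsPOVM {d : ℕ} {S : Type*} [Fintype S] (E : S → Matrix (Fin d) (Fin d) ℂ) : Prop :=
  (∀ s, (E s).PosSemidef) ∧ ∑ s, E s = 1

/-- `B` lists the vectors of an orthonormal basis of ℂ^d. -/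
def IsONB {d : ℕ} (B : Fin d → Fin d → ℂ) : Prop :=
  ∀ i j, star (B i) ⬝ᵥ B j = if i = j then 1 else 0

/-- Two bases of ℂ^d are mutually unbiased: all squared overlaps equal 1/d. -/
def AreMUB {d : ℕ} (B C : Fin d → Fin d → ℂ) : Prop :=
  ∀ i j, ‖star (B i) ⬝ᵥ C j‖ ^ 2 = 1 / d

/-- Mutual information (in bits) between Alice's input `i` (prior `p i`, state `B i`)
and Bob's POVM outcome `s`:  `I = H({p i}) - ∑ s p(s) H({p_{i|s}})`. -/
def mutInfo {d : ℕ} {S : Type*} [Fintype S] (B : Fin d → Fin d → ℂ) (p : Fin d → ℝ)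
    (E : S → Matrix (Fin d) (Fin d) ℂ) : ℝ :=
  shannonEntropy p -
    ∑ s, (∑ i, p i * outProb (E s) (B i)) *
      shannonEntropy (fun i =>
        p i * outProb (E s) (B i) / ∑ j, p j * outProb (E s) (B j))

/-! Think of `P i s = ⟨i|M_s|i⟩` as a classical channel. Its mutual information is
`I(p) = ∑ᵢ pᵢ D(Pᵢ ‖ pP)`, and replacing the output distribution `pP` by any other
distribution `r` can only increase the right-hand side (the excess is `D(pP ‖ r) ≥ 0`).
Taking `r` to be the output distribution of the uniform prior and bounding `pᵢ ≤ p₁` gives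
`I(p) ≤ p₁ ∑ᵢ D(Pᵢ ‖ r) = d p₁ Ĩ`. -/

open Finset Real

section ClassicalChannel

variable {ι S : Type*} [Fintype ι]

/-- `P i` is the law of the output on input `i`. -/
def outputDist (p : ι → ℝ) (P : ι → S → ℝ) : S → ℝ :=
  fun s => ∑ i, p i * P i s

lemma outputDist_nonneg {p : ι → ℝ} {P : ι → S → ℝ} (hp : ∀ i, 0 ≤ p i)
    (hP : ∀ i s, 0 ≤ P i s) (s : S) : 0 ≤ outputDist p P s :=
  sum_nonneg fun i _ => mul_nonneg (hp i) (hP i s)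

lemma mul_le_outputDist {p : ι → ℝ} {P : ι → S → ℝ} (hp : ∀ i, 0 ≤ p i)
    (hP : ∀ i s, 0 ≤ P i s) (i : ι) (s : S) : p i * P i s ≤ outputDist p P s :=
  single_le_sum (f := fun j => p j * P j s) (fun j _ => mul_nonneg (hp j) (hP j s))
    (mem_univ i)

variable [Fintype S]

def relEntropy (a b : S → ℝ) : ℝ :=
  ∑ s, a s * logb 2 (a s / b s)

def channelInfo (p : ι → ℝ) (P : ι → S → ℝ) : ℝ :=
  ∑ i, p i * relEntropy (P i) (outputDist p P)

lemma sub_le_mul_log_div {a b : ℝ} (ha : 0 ≤ a) (hb : 0 ≤ b) (hab : 0 < a → 0 < b) :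
    a - b ≤ a * log (a / b) := by
  rcases ha.eq_or_lt with rfl | ha
  · simpa using hb
  have hb := hab ha
  have hlog := one_sub_inv_le_log_of_pos (div_pos ha hb)
  rw [inv_div] at hlog
  calc a - b = a * (1 - b / a) := by field_simp
    _ ≤ a * log (a / b) := mul_le_mul_of_nonneg_left hlog ha.le

lemma relEntropy_nonneg {a b : S → ℝ} (ha : ∀ s, 0 ≤ a s) (hb : ∀ s, 0 ≤ b s)
    (hab : ∀ s, 0 < a s → 0 < b s) (hsum : ∑ s, b s ≤ ∑ s, a s) :
    0 ≤ relEntropy a b := by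
  have key : ∑ s, (a s - b s) ≤ ∑ s, a s * log (a s / b s) :=
    sum_le_sum fun s _ => sub_le_mul_log_div (ha s) (hb s) (hab s)
  rw [sum_sub_distrib] at key
  unfold relEntropy
  simp_rw [logb, mul_div_assoc', ← sum_div]
  exact div_nonneg (by linarith) (log_pos one_lt_two).le

lemma sum_outputDist {p : ι → ℝ} {P : ι → S → ℝ} (hP1 : ∀ i, ∑ s, P i s = 1) :
    ∑ s, outputDist p P s = ∑ i, p i := by
  unfold outputDist
  rw [sum_comm]
  simp_rw [← mul_sum, hP1, mul_one]

lemma mul_shannonEntropy_div (x : ι → ℝ) (c : ℝ) :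
    c * shannonEntropy (fun i => x i / c) = -∑ i, x i * logb 2 (x i / c) := by
  rcases eq_or_ne c 0 with rfl | hc
  · simp
  unfold shannonEntropy
  rw [mul_neg, mul_sum]
  simp_rw [← mul_assoc, mul_div_cancel₀ _ hc]

lemma mul_logb_mul_div_sub_mul_logb {a b c : ℝ} (ha : 0 ≤ a) (hb : 0 ≤ b) (hc : a * b ≤ c) :
    a * b * logb 2 (a * b / c) - a * b * logb 2 a = a * (b * logb 2 (b / c)) := by
  rcases ha.eq_or_lt with rfl | ha
  · simp
  rcases hb.eq_or_lt with rfl | hb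
  · simp
  have hc : c ≠ 0 := (lt_of_lt_of_le (mul_pos ha hb) hc).ne'
  rw [logb_div (mul_pos ha hb).ne' hc, logb_mul ha.ne' hb.ne', logb_div hb.ne' hc]
  ring

lemma shannonEntropy_sub_eq_channelInfo {p : ι → ℝ} {P : ι → S → ℝ} (hp : ∀ i, 0 ≤ p i)
    (hP : ∀ i s, 0 ≤ P i s) (hP1 : ∀ i, ∑ s, P i s = 1) :
    shannonEntropy p - ∑ s, outputDist p P s *
        shannonEntropy (fun i => p i * P i s / outputDist p P s) = channelInfo p P := by
  have hH : shannonEntropy p = -∑ i, ∑ s, p i * P i s * logb 2 (p i) := by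
    unfold shannonEntropy
    simp_rw [mul_right_comm _ _ (logb 2 _), ← mul_sum, hP1, mul_one]
  simp_rw [mul_shannonEntropy_div, hH, sum_neg_distrib, sub_neg_eq_add]
  rw [sum_comm (f := fun s i => p i * P i s * logb 2 (p i * P i s / outputDist p P s)),
    neg_add_eq_sub, ← sum_sub_distrib, channelInfo]
  refine sum_congr rfl fun i _ => ?_
  rw [← sum_sub_distrib, relEntropy, mul_sum]
  exact sum_congr rfl fun s _ =>
    mul_logb_mul_div_sub_mul_logb (hp i) (hP i s) (mul_le_outputDist hp hP i s)

lemma channelInfo_le_sum_relEntropy {p : ι → ℝ} {P : ι → S → ℝ} {r : S → ℝ}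
    (hp : ∀ i, 0 ≤ p i) (hP : ∀ i s, 0 ≤ P i s) (hr : ∀ s, 0 ≤ r s)
    (hPr : ∀ i s, 0 < P i s → 0 < r s) (hsum : ∑ s, r s ≤ ∑ s, outputDist p P s) :
    channelInfo p P ≤ ∑ i, p i * relEntropy (P i) r := by
  set o := outputDist p P
  have hsplit : ∀ i s, p i * (P i s * logb 2 (P i s / r s)) =
      p i * (P i s * logb 2 (P i s / o s)) + p i * P i s * logb 2 (o s / r s) := by
    intro i s
    rcases (mul_nonneg (hp i) (hP i s)).eq_or_lt with h | h
    · rcases mul_eq_zero.mp h.symm with h | h <;> simp [h]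
    have hPis := pos_of_mul_pos_right h (hp i)
    have hos := h.trans_le (mul_le_outputDist hp hP i s)
    rw [logb_div hPis.ne' (hPr i s hPis).ne', logb_div hPis.ne' hos.ne',
      logb_div hos.ne' (hPr i s hPis).ne']
    ring
  have hor : ∀ s, 0 < o s → 0 < r s := by
    intro s hos
    obtain ⟨i, -, hi⟩ := exists_lt_of_sum_lt (s := univ) (f := fun _ => (0 : ℝ))
      (g := fun i => p i * P i s) (by rw [sum_const_zero]; exact hos)
    exact hPr i s (pos_of_mul_pos_right hi (hp i))
  have hgibbs := relEntropy_nonneg (outputDist_nonneg hp hP) hr hor hsum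
  calc channelInfo p P ≤ channelInfo p P + relEntropy o r := le_add_of_nonneg_right hgibbs
    _ = ∑ i, p i * relEntropy (P i) r := by
      simp only [channelInfo, relEntropy, mul_sum, hsplit, sum_add_distrib]
      rw [sum_comm (f := fun i s => p i * P i s * logb 2 (o s / r s))]
      simp_rw [← sum_mul]
      rfl

lemma channelInfo_le_card_mul_channelInfo_uniform {p : ι → ℝ} {P : ι → S → ℝ} {q : ℝ}
    (hp : ∀ i, 0 ≤ p i) (hpsum : ∑ i, p i = 1) (hpq : ∀ i, p i ≤ q)
    (hP : ∀ i s, 0 ≤ P i s) (hP1 : ∀ i, ∑ s, P i s = 1) :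
    channelInfo p P ≤ (Fintype.card ι * q) * channelInfo (fun _ => 1 / Fintype.card ι) P := by
  have hcard : (0 : ℝ) < Fintype.card ι := by
    have hne : (univ : Finset ι).Nonempty := nonempty_of_sum_ne_zero (hpsum ▸ one_ne_zero)
    exact_mod_cast Fintype.card_pos_iff.mpr (univ_nonempty_iff.mp hne)
  set u : ι → ℝ := fun _ => 1 / Fintype.card ι
  have hu : ∀ i, 0 < u i := fun _ => by positivity
  set r := outputDist u P
  have hr : ∀ s, 0 ≤ r s := outputDist_nonneg (fun i => (hu i).le) hP
  have hPr : ∀ i s, 0 < P i s → 0 < r s := fun i s hPis =>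
    (mul_pos (hu i) hPis).trans_le (mul_le_outputDist (fun i => (hu i).le) hP i s)
  have hrsum : ∑ s, r s = 1 := by
    rw [sum_outputDist hP1, sum_const, card_univ, nsmul_eq_mul]
    field_simp
  have hD : ∀ i, 0 ≤ relEntropy (P i) r := fun i =>
    relEntropy_nonneg (hP i) hr (hPr i) (by rw [hrsum, hP1])
  calc channelInfo p P ≤ ∑ i, p i * relEntropy (P i) r :=
        channelInfo_le_sum_relEntropy hp hP hr hPr (by rw [hrsum, sum_outputDist hP1, hpsum])
    _ ≤ ∑ i, q * relEntropy (P i) r :=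
        sum_le_sum fun i _ => mul_le_mul_of_nonneg_right (hpq i) (hD i)
    _ = (Fintype.card ι * q) * channelInfo u P := by
        rw [channelInfo, mul_sum]
        refine sum_congr rfl fun i _ => ?_
        simp only [u, r]
        field_simp

end ClassicalChannel

lemma outProb_nonneg {d : ℕ} {M : Matrix (Fin d) (Fin d) ℂ} (hM : M.PosSemidef)
    (v : Fin d → ℂ) : 0 ≤ outProb M v :=
  hM.re_dotProduct_nonneg v

lemma sum_outProb {d : ℕ} {S : Type*} [Fintype S] {E : S → Matrix (Fin d) (Fin d) ℂ}
    (hE : ∑ s, E s = 1) {v : Fin d → ℂ} (hv : star v ⬝ᵥ v = 1) : ∑ s, outProb (E s) v = 1 := by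
  simp only [outProb, ← Complex.re_sum, ← dotProduct_sum, ← Matrix.sum_mulVec, hE,
    Matrix.one_mulVec, hv, Complex.one_re]

theorem weighted_info_le_uniform_info_general
    {S : Type*} [Fintype S] (d : ℕ)
    (B : Fin d → Fin d → ℂ) (hB : IsONB B)
    (p : Fin d → ℝ) (hp : ∀ i, 0 ≤ p i) (hpsum : ∑ i, p i = 1)
    (q : ℝ) (hq : IsGreatest (Set.range p) q)
    (E : S → Matrix (Fin d) (Fin d) ℂ) (hE : IsPOVM E) :
    (1 / (d * q)) * mutInfo B p E ≤ mutInfo B (fun _ => 1 / (d : ℝ)) E := by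
  set P : Fin d → S → ℝ := fun i s => outProb (E s) (B i)
  have hP : ∀ i s, 0 ≤ P i s := fun i s => outProb_nonneg (hE.1 s) (B i)
  have hP1 : ∀ i, ∑ s, P i s = 1 := fun i => sum_outProb hE.2 (by simpa using hB i i)
  have hpq : ∀ i, p i ≤ q := fun i => hq.2 ⟨i, rfl⟩
  have hdq : 1 ≤ d * q := by
    calc (1 : ℝ) = ∑ i, p i := hpsum.symm
      _ ≤ ∑ _ : Fin d, q := sum_le_sum fun i _ => hpq i
      _ = d * q := by simp
  have hmain := channelInfo_le_card_mul_channelInfo_uniform hp hpsum hpq hP hP1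
  rw [Fintype.card_fin] at hmain
  have hmutInfo : ∀ p' : Fin d → ℝ, (∀ i, 0 ≤ p' i) → mutInfo B p' E = channelInfo p' P :=
    fun p' hp' => shannonEntropy_sub_eq_channelInfo hp' hP hP1
  rw [hmutInfo p hp, hmutInfo _ fun _ => by positivity, one_div_mul_eq_div,
    div_le_iff₀ (by linarith)]
  linarith

/-- For a fixed basis and a fixed POVM, the mutual information `I` for arbitrary priors
(with maximal prior probability `q`) and the mutual information `Ĩ` for uniform priors
satisfy `(1/(d q)) I ≤ Ĩ`. -/
theorem weighted_info_le_uniform_info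
    {S : Type*} [Fintype S] (d : ℕ) (hd : 2 ≤ d)
    (B : Fin d → Fin d → ℂ) (hB : IsONB B)
    (p : Fin d → ℝ) (hp : ∀ i, 0 ≤ p i) (hpsum : ∑ i, p i = 1)
    (q : ℝ) (hq : IsGreatest (Set.range p) q)
    (E : S → Matrix (Fin d) (Fin d) ℂ) (hE : IsPOVM E) :
    (1 / (d * q)) * mutInfo B p E ≤ mutInfo B (fun _ => 1 / (d : ℝ)) E :=
  weighted_info_le_uniform_info_general d B hB p hp hpsum q hq E hE
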